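/- Let 𝒯 ⊆ [0,1]^{n×n} be the set of SST tournament matrices (θ_{ij} ≤ θ_{ik} whenever i ≠ k, i ≠ j, k < j; θ_{ji} = 1 - θ_{ij} for i ≠ j; θ_{ii} = 0; θ_{ij} ≤ 1/2 for i < j) and let ℳ ⊆ [0,1]^{n×n} be the set of matrices nondecreasing in both row and column index. Define f : 𝒯 → [0,1]^{n×n} by first replacing the diagonal entry (i,i) with min{θ_{i,i-1}, θ_{i+1,i}} (with the obvious boundary conventions) and then reversing the column order: f(θ)_{i,j} = D(θ)_{i, n-j+1}. Then f is injective, f(𝒯) ⊆ ℳ, and for all θ, θ' ∈ 𝒯, ‖θ - θ'‖_F ≤ ‖f(θ) - f(θ')‖_F. -/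

import Mathlib

/-!
Off the diagonal, `f` only permutes the entries of `θ`, and on the diagonal it replaces `0` by a
value of its own; this gives injectivity and the Frobenius inequality. Monotonicity of `f θ` is
the SST ordering read along rows, and, through `θ_{ji} = 1 - θ_{ij}`, along columns. The filled
diagonal fits in because every entry above the diagonal is at most `1/2`, every entry below it
at least `1/2`, and `D(θ)_{ii}` is squeezed between `1/2` and its two neighbours below the
diagonal.
-/

open Finset

/-- SST tournament constraints (identity ordering; matrix space `𝒯`),
with 1-based indices in `[1, n]`, including `θ_{ij} ≤ 1/2` for `i < j`. -/
def SSTT (n : ℕ) (θ : ℕ → ℕ → ℝ) : Prop :=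
  (∀ i ∈ Icc 1 n, ∀ j ∈ Icc 1 n, θ i j ∈ Set.Icc (0 : ℝ) 1) ∧
  (∀ i ∈ Icc 1 n, ∀ j ∈ Icc 1 n, ∀ k ∈ Icc 1 n,
      i ≠ j → i ≠ k → k < j → θ i j ≤ θ i k) ∧
  (∀ i ∈ Icc 1 n, ∀ j ∈ Icc 1 n, i ≠ j → θ j i = 1 - θ i j) ∧
  (∀ i ∈ Icc 1 n, θ i i = 0) ∧
  (∀ i ∈ Icc 1 n, ∀ j ∈ Icc 1 n, i < j → θ i j ≤ 1 / 2)

/-- The diagonal-filling map `D`, with the boundary conventions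
`D(θ)_{11} = θ_{21}` and `D(θ)_{nn} = θ_{n,n-1}`. -/
def Dmap (n : ℕ) (θ : ℕ → ℕ → ℝ) : ℕ → ℕ → ℝ := fun i j =>
  if i = j then
    (if i = 1 then θ 2 1 else if i = n then θ n (n - 1)
      else min (θ i (i - 1)) (θ (i + 1) i))
  else θ i j

/-- The map `f = φ ∘ D`: fill the diagonal, then reverse the column order. -/
def fmap (n : ℕ) (θ : ℕ → ℕ → ℝ) : ℕ → ℕ → ℝ := fun i j => Dmap n θ i (n - j + 1)

namespace SSTT

variable {n : ℕ} {θ : ℕ → ℕ → ℝ}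

lemma mem_Icc (h : SSTT n θ) {i j : ℕ} (hi : i ∈ Icc 1 n) (hj : j ∈ Icc 1 n) :
    θ i j ∈ Set.Icc (0 : ℝ) 1 :=
  h.1 i hi j hj

lemma antitone_row (h : SSTT n θ) {i j k : ℕ} (hi : i ∈ Icc 1 n) (hj : j ∈ Icc 1 n)
    (hk : k ∈ Icc 1 n) (hij : i ≠ j) (hik : i ≠ k) (hkj : k ≤ j) : θ i j ≤ θ i k := by
  rcases hkj.eq_or_lt with rfl | hlt
  · exact le_rfl
  · exact h.2.1 i hi j hj k hk hij hik hlt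

lemma monotone_col (h : SSTT n θ) {k a b : ℕ} (hk : k ∈ Icc 1 n) (ha : a ∈ Icc 1 n)
    (hb : b ∈ Icc 1 n) (hka : k ≠ a) (hkb : k ≠ b) (hab : a ≤ b) : θ a k ≤ θ b k := by
  rw [h.2.2.1 k hk a ha hka, h.2.2.1 k hk b hb hkb]
  linarith [h.antitone_row hk hb ha hkb hka hab]

lemma le_half (h : SSTT n θ) {i j : ℕ} (hi : i ∈ Icc 1 n) (hj : j ∈ Icc 1 n) (hij : i < j) :
    θ i j ≤ 1 / 2 :=
  h.2.2.2.2 i hi j hj hij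

lemma half_le (h : SSTT n θ) {i j : ℕ} (hi : i ∈ Icc 1 n) (hj : j ∈ Icc 1 n) (hji : j < i) :
    1 / 2 ≤ θ i j := by
  rw [h.2.2.1 j hj i hi hji.ne]
  linarith [h.le_half hj hi hji]

end SSTT

section Dmap

variable {n : ℕ} {θ : ℕ → ℕ → ℝ}

lemma Dmap_of_ne {i j : ℕ} (hij : i ≠ j) : Dmap n θ i j = θ i j :=
  if_neg hij

lemma Dmap_diag_le_left {i : ℕ} (h1 : 1 < i) : Dmap n θ i i ≤ θ i (i - 1) := by
  rw [Dmap, if_pos rfl]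
  split_ifs with h₁ h₂
  · omega
  · rw [h₂]
  · exact min_le_left _ _

lemma Dmap_diag_le_below {i : ℕ} (hn : i < n) : Dmap n θ i i ≤ θ (i + 1) i := by
  rw [Dmap, if_pos rfl]
  split_ifs with h₁ h₂
  · rw [h₁]
  · omega
  · exact min_le_right _ _

lemma SSTT.half_le_Dmap_diag (h : SSTT n θ) (hn : 2 ≤ n) {i : ℕ} (hi : i ∈ Icc 1 n) :
    1 / 2 ≤ Dmap n θ i i := by
  have hi' := Finset.mem_Icc.1 hi
  rw [Dmap, if_pos rfl]
  split_ifs with h₁ h₂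
  · exact h.half_le (Finset.mem_Icc.2 ⟨by omega, hn⟩) (Finset.mem_Icc.2 ⟨le_rfl, by omega⟩)
      one_lt_two
  · exact h.half_le (Finset.mem_Icc.2 ⟨by omega, le_rfl⟩)
      (Finset.mem_Icc.2 ⟨by omega, by omega⟩) (by omega)
  · exact le_min (h.half_le hi (Finset.mem_Icc.2 ⟨by omega, by omega⟩) (by omega))
      (h.half_le (Finset.mem_Icc.2 ⟨by omega, by omega⟩) hi (by omega))

lemma SSTT.Dmap_mem_Icc (h : SSTT n θ) (hn : 2 ≤ n) {i j : ℕ} (hi : i ∈ Icc 1 n)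
    (hj : j ∈ Icc 1 n) : Dmap n θ i j ∈ Set.Icc (0 : ℝ) 1 := by
  have hi' := Finset.mem_Icc.1 hi
  rcases ne_or_eq i j with hij | rfl
  · rw [Dmap_of_ne hij]; exact h.mem_Icc hi hj
  refine ⟨by linarith [h.half_le_Dmap_diag hn hi], ?_⟩
  rcases hi'.2.lt_or_eq with hlt | rfl
  · exact (Dmap_diag_le_below hlt).trans
      (h.mem_Icc (Finset.mem_Icc.2 ⟨by omega, by omega⟩) hi).2
  · exact (Dmap_diag_le_left (by omega)).trans
      (h.mem_Icc hi (Finset.mem_Icc.2 ⟨by omega, by omega⟩)).2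

lemma SSTT.Dmap_antitone_row (h : SSTT n θ) (hn : 2 ≤ n) {i c c' : ℕ} (hi : i ∈ Icc 1 n)
    (hc : c ∈ Icc 1 n) (hc' : c' ∈ Icc 1 n) (hcc : c' ≤ c) : Dmap n θ i c ≤ Dmap n θ i c' := by
  rcases hcc.eq_or_lt with rfl | hlt
  · exact le_rfl
  have hi' := Finset.mem_Icc.1 hi
  have hc'' := Finset.mem_Icc.1 hc'
  by_cases hic : i = c
  · subst hic
    rw [Dmap_of_ne hlt.ne']
    exact (Dmap_diag_le_left (by omega)).trans (h.antitone_row hi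
      (Finset.mem_Icc.2 ⟨by omega, by omega⟩) hc' (by omega) hlt.ne' (by omega))
  by_cases hic' : i = c'
  · subst hic'
    rw [Dmap_of_ne hic]
    exact (h.le_half hi hc hlt).trans (h.half_le_Dmap_diag hn hi)
  rw [Dmap_of_ne hic, Dmap_of_ne hic']
  exact h.antitone_row hi hc hc' hic hic' hlt.le

lemma SSTT.Dmap_monotone_col (h : SSTT n θ) (hn : 2 ≤ n) {c i i' : ℕ} (hc : c ∈ Icc 1 n)
    (hi : i ∈ Icc 1 n) (hi' : i' ∈ Icc 1 n) (hii : i ≤ i') : Dmap n θ i c ≤ Dmap n θ i' c := by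
  rcases hii.eq_or_lt with rfl | hlt
  · exact le_rfl
  have hi'' := Finset.mem_Icc.1 hi'
  by_cases hic : i = c
  · subst hic
    rw [Dmap_of_ne hlt.ne']
    exact (Dmap_diag_le_below (by omega)).trans (h.monotone_col hi
      (Finset.mem_Icc.2 ⟨by omega, by omega⟩) hi' (by omega) hlt.ne (by omega))
  by_cases hic' : i' = c
  · subst hic'
    rw [Dmap_of_ne hic]
    exact (h.le_half hi hi' hlt).trans (h.half_le_Dmap_diag hn hi')
  rw [Dmap_of_ne hic, Dmap_of_ne hic']
  exact h.monotone_col hc hi hi' (Ne.symm hic) (Ne.symm hic') hlt.le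

lemma SSTT.sq_sub_le_sq_sub_Dmap {θ' : ℕ → ℕ → ℝ} (h : SSTT n θ) (h' : SSTT n θ') {i j : ℕ}
    (hi : i ∈ Icc 1 n) : (θ i j - θ' i j) ^ 2 ≤ (Dmap n θ i j - Dmap n θ' i j) ^ 2 := by
  rcases ne_or_eq i j with hij | rfl
  · rw [Dmap_of_ne hij, Dmap_of_ne hij]
  · rw [h.2.2.2.1 i hi, h'.2.2.2.1 i hi, sub_self, zero_pow two_ne_zero]
    exact sq_nonneg _

end Dmap

lemma rev_mem_Icc {n j : ℕ} (hj : j ∈ Icc 1 n) : n - j + 1 ∈ Icc 1 n := by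
  have := Finset.mem_Icc.1 hj
  exact Finset.mem_Icc.2 ⟨by omega, by omega⟩

lemma rev_rev {n j : ℕ} (hj : j ∈ Icc 1 n) : n - (n - j + 1) + 1 = j := by
  have := Finset.mem_Icc.1 hj
  omega

lemma sum_Icc_rev {M : Type*} [AddCommMonoid M] (n : ℕ) (g : ℕ → M) :
    ∑ j ∈ Icc 1 n, g (n - j + 1) = ∑ j ∈ Icc 1 n, g j :=
  sum_nbij' (fun j => n - j + 1) (fun j => n - j + 1) (fun _ => rev_mem_Icc)
    (fun _ => rev_mem_Icc) (fun _ => rev_rev) (fun _ => rev_rev) (fun _ _ => rfl)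

lemma fmap_rev {n i j : ℕ} {θ : ℕ → ℕ → ℝ} (hj : j ∈ Icc 1 n) :
    fmap n θ i (n - j + 1) = Dmap n θ i j :=
  congrArg (Dmap n θ i) (rev_rev hj)

theorem stmt_14 (n : ℕ) (hn : 2 ≤ n)
    (θ θ' : ℕ → ℕ → ℝ) (hθ : SSTT n θ) (hθ' : SSTT n θ') :
    -- `f(𝒯) ⊆ ℳ`: the image has entries in `[0,1]`...
    (∀ i ∈ Icc 1 n, ∀ j ∈ Icc 1 n, fmap n θ i j ∈ Set.Icc (0 : ℝ) 1) ∧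
    -- ... and is monotone in both coordinates
    (∀ i ∈ Icc 1 n, ∀ i' ∈ Icc 1 n, ∀ j ∈ Icc 1 n, ∀ j' ∈ Icc 1 n,
        i ≤ i' → j ≤ j' → fmap n θ i j ≤ fmap n θ i' j') ∧
    -- injectivity of `f` on `𝒯`
    ((∀ i ∈ Icc 1 n, ∀ j ∈ Icc 1 n, fmap n θ i j = fmap n θ' i j) →
      ∀ i ∈ Icc 1 n, ∀ j ∈ Icc 1 n, θ i j = θ' i j) ∧
    -- `f` expands the Frobenius distance
    Real.sqrt (∑ i ∈ Icc 1 n, ∑ j ∈ Icc 1 n, (θ i j - θ' i j) ^ 2)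
      ≤ Real.sqrt (∑ i ∈ Icc 1 n, ∑ j ∈ Icc 1 n, (fmap n θ i j - fmap n θ' i j) ^ 2) := by
  refine ⟨fun i hi j hj => hθ.Dmap_mem_Icc hn hi (rev_mem_Icc hj), ?_, ?_, ?_⟩
  · intro i hi i' hi' j hj j' hj' hii hjj
    have := Finset.mem_Icc.1 hj'
    exact (hθ.Dmap_antitone_row hn hi (rev_mem_Icc hj) (rev_mem_Icc hj') (by omega)).trans
      (hθ.Dmap_monotone_col hn (rev_mem_Icc hj') hi hi' hii)
  · intro hf i hi j hj
    rcases ne_or_eq i j with hij | rfl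
    · have := hf i hi _ (rev_mem_Icc hj)
      rwa [fmap_rev hj, fmap_rev hj, Dmap_of_ne hij, Dmap_of_ne hij] at this
    · rw [hθ.2.2.2.1 i hi, hθ'.2.2.2.1 i hi]
  · refine Real.sqrt_le_sqrt (sum_le_sum fun i hi => ?_)
    rw [← sum_Icc_rev n (fun j => (fmap n θ i j - fmap n θ' i j) ^ 2)]
    refine sum_le_sum fun j hj => ?_
    rw [fmap_rev hj, fmap_rev hj]
    exact hθ.sq_sub_le_sq_sub_Dmap hθ' hi
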